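/- For all real numbers a, b, c with a² + b² + c² = 1, the absolute value of I₁₂(a,b,c) is at most 1/7776. (This is the global maximum of the absolute value of the degree-12 fundamental SLOCC invariant restricted to real semi-simple 3-qutrit states.) -/
import Mathlib

set_option maxHeartbeats 1000000

/-- Restriction of the degree-12 fundamental invariant to normalized semi-simple states. -/
noncomputable def I₁₂ (a b c : ℝ) : ℝ :=
  (1 / 729) * (a ^ 9 * b ^ 3 + a ^ 3 * b ^ 9 + a ^ 9 * c ^ 3 + b ^ 9 * c ^ 3 +
    a ^ 3 * c ^ 9 + b ^ 3 * c ^ 9 -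
    4 * (a ^ 6 * b ^ 6 + a ^ 6 * c ^ 6 + b ^ 6 * c ^ 6) +
    2 * (a ^ 6 * b ^ 3 * c ^ 3 + a ^ 3 * b ^ 6 * c ^ 3 + a ^ 3 * b ^ 3 * c ^ 6))

lemma master_ineq (m n k : ℝ) (hm : 0 ≤ m) (hn : 0 ≤ n) (hk : 0 ≤ k) :
    16*(m*n*(m+n)*(m^3+n^3+2*k^3)) + 16*(m*k*(m+k)*(m^3+k^3+2*n^3)) +
      16*(n*k*(n+k)*(n^3+k^3+2*m^3)) + 128*(m^3*n^3+m^3*k^3+n^3*k^3) ≤ 3*(m+n+k)^6 := by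
  have cert : 3*(m+n+k)^6 - (16*(m*n*(m+n)*(m^3+n^3+2*k^3)) + 16*(m*k*(m+k)*(m^3+k^3+2*n^3)) +
      16*(n*k*(n+k)*(n^3+k^3+2*m^3)) + 128*(m^3*n^3+m^3*k^3+n^3*k^3)) =
      ((921389/32768)*((53217/3685556)*m^3 + (-60475/526508)*m^2*n + (193217/3685556)*m^2*k + (697779/3685556)*m*n^2 + (1421/131627)*m*n*k + (-460587/3685556)*m*k^2 + (-327671/3685556)*n^3 + 1*n^2*k + (-1786019/1842778)*n*k^2 + (214153/3685556)*k^3)^2 + (12834506722071/483073196032)*((223089865377/4278168907357)*m^3 + (-185186016197/4278168907357)*m^2*n + (-10421316883513/12834506722071)*m^2*k + (303901146931/4278168907357)*m*n^2 + (7884732335284/12834506722071)*m*n*k + 1*m*k^2 + (-341804996111/4278168907357)*n^3 + (4107874423022/12834506722071)*n*k^2 + (-3082459434689/12834506722071)*k^3)^2 + (48229771949230405211/841122232537645056)*((-9595640862796021377/48229771949230405211)*m^3 + (6424485745775861358/48229771949230405211)*m^2*n + (16961803364140119034/48229771949230405211)*m^2*k + (12617326627373459388/48229771949230405211)*m*n^2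 + 1*m*n*k + (-9446171510353299369/48229771949230405211)*n^3 + (16812334011697397026/48229771949230405211)*n*k^2 + (-7366162501344097657/48229771949230405211)*k^3)^2 + (4451962214893226032014981/197549145904047739744256)*((24025193426744093270726101/142462790876583233024479392)*m^3 + (-7046267285691015210928067/6783942422694439667832352)*m^2*n + (-200086010387528433667651/1071148803583332579131424)*m^2*k + 1*m*n^2 + (-9258185651908003432858043/71231395438291616512239696)*n^3 + (3982531337254704614661151/35615697719145808256119848)*n*k^2 + (431040992466198067845247/23743798479430538837413232)*k^3)^2 + (3215122302995101080861207721/140397615983274567811914006528)*((-460233594249621185588774611/3215122302995101080861207721)*m^3 + (817170076605642808189670745/3215122302995101080861207721)*m^2*n + 1*m^2*k + (-356936482356021622600896134/3215122302995101080861207721)*n^3 + (3111825191101501517873329244/3215122302995101080861207721)*n*k^2 + (-2754888708745479895272433110/3215122302995101080861207721)*k^3)^2 + (85869555879438971583834900700147/4003418849732651944271082074865664)*((-9258549031609628890622419358270/85869555879438971583834900700147)*m^3 + 1*m^2*n + (-76611006847829342693212481341877/85869555879438971583834900700147)*n^3 + (67352457816219713802590061983607/85869555879438971583834900700147)*n*k^2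 + (9258549031609628890622419358270/85869555879438971583834900700147)*k^3)^2 + (12952036639904442418421999211201431/1231025953087637096625857136437307392)*(1*m^3 + (-1)*n^3 + 2*n*k^2 + (-1)*k^3)^2) + m*n*((1790127/32768)*((18422/596709)*m^2 + (-149515/1790127)*m*n + (2955511/3580254)*m*k + (94249/1790127)*n^2 + (6060821/7160508)*n*k + 1*k^2)^2 + (11371514884823/938542104576)*((-10214992579224/11371514884823)*m^2 + (-10941724660/11371514884823)*m*n + (-1470946665646/11371514884823)*m*k + (10225934303884/11371514884823)*n^2 + 1*n*k)^2 + (5216114414476507291/372621799745880064)*((2360585730206935055/5216114414476507291)*m^2 + (1225285053648562177/10432228828953014582)*m*n + 1*m*k + (-5946456514062432287/10432228828953014582)*n^2)^2 + (7294137378467864610219/683686548534264763645952)*((1865307210711718157486/2431379126155954870073)*m^2 + 1*m*n + (-4296686336867673027559/2431379126155954870073)*n^2)^2 + (71929283200142711874471685/159342862411756658365104128)*(1*m^2 + (-1)*n^2)^2) + m*k*((3093461/65536)*((-321302/3093461)*m^2 + (2497221/3093461)*m*n + (-212988/3093461)*m*k + (3116574/3093461)*n^2 + 1*n*k + (534290/3093461)*k^2)^2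 + (2554732631373/202733060096)*((1945173316987/2554732631373)*m^2 + (1449282911404/2554732631373)*m*n + (-273801137917/2554732631373)*m*k + 1*n^2 + (-557124059690/851577543791)*k^2)^2 + (51650599898730523/167426957729660928)*((185579008944269927/51650599898730523)*m^2 + (376660054730775149/51650599898730523)*m*n + 1*m*k + (-237229608843000450/51650599898730523)*k^2)^2 + (1962118419781333586841/3384973714963203555328)*((861165647436514558891/1962118419781333586841)*m^2 + 1*m*n + (-861165647436514558891/1962118419781333586841)*k^2)^2 + (112456835306491573212842815/64294696379394738973605888)*(1*m^2 + (-1)*k^2)^2) + n*k*((156387/65536)*((-329411/156387)*m^2 + (5073/52129)*m*n + (-413200/156387)*m*k + (65056/52129)*n^2 + 1*n*k + (-117185/52129)*k^2)^2 + (11216964439/3416326144)*((26863098525/11216964439)*m^2 + (28567316381/11216964439)*m*n + (13291525932/11216964439)*m*k + 1*n^2 + (-1)*k^2)^2 + (60597328668994961/2205344944422912)*((60309872555682319/60597328668994961)*m^2 + (57337120339143768/60597328668994961)*m*n + 1*m*k)^2 + (14395082276906755898923/1985653265825626882048)*((9902925568458681703573/28790164553813511797846)*m^2 + 1*m*n)^2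 + (70753539271762113732913501/1886792224198722309183635456)*(1*m^2)^2) := by ring
  have t0 : (0:ℝ) ≤ ((921389/32768)*((53217/3685556)*m^3 + (-60475/526508)*m^2*n + (193217/3685556)*m^2*k + (697779/3685556)*m*n^2 + (1421/131627)*m*n*k + (-460587/3685556)*m*k^2 + (-327671/3685556)*n^3 + 1*n^2*k + (-1786019/1842778)*n*k^2 + (214153/3685556)*k^3)^2 + (12834506722071/483073196032)*((223089865377/4278168907357)*m^3 + (-185186016197/4278168907357)*m^2*n + (-10421316883513/12834506722071)*m^2*k + (303901146931/4278168907357)*m*n^2 + (7884732335284/12834506722071)*m*n*k + 1*m*k^2 + (-341804996111/4278168907357)*n^3 + (4107874423022/12834506722071)*n*k^2 + (-3082459434689/12834506722071)*k^3)^2 + (48229771949230405211/841122232537645056)*((-9595640862796021377/48229771949230405211)*m^3 + (6424485745775861358/48229771949230405211)*m^2*n + (16961803364140119034/48229771949230405211)*m^2*k + (12617326627373459388/48229771949230405211)*m*n^2 + 1*m*n*k + (-9446171510353299369/48229771949230405211)*n^3 + (16812334011697397026/48229771949230405211)*n*k^2 + (-7366162501344097657/48229771949230405211)*k^3)^2 +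 (4451962214893226032014981/197549145904047739744256)*((24025193426744093270726101/142462790876583233024479392)*m^3 + (-7046267285691015210928067/6783942422694439667832352)*m^2*n + (-200086010387528433667651/1071148803583332579131424)*m^2*k + 1*m*n^2 + (-9258185651908003432858043/71231395438291616512239696)*n^3 + (3982531337254704614661151/35615697719145808256119848)*n*k^2 + (431040992466198067845247/23743798479430538837413232)*k^3)^2 + (3215122302995101080861207721/140397615983274567811914006528)*((-460233594249621185588774611/3215122302995101080861207721)*m^3 + (817170076605642808189670745/3215122302995101080861207721)*m^2*n + 1*m^2*k + (-356936482356021622600896134/3215122302995101080861207721)*n^3 + (3111825191101501517873329244/3215122302995101080861207721)*n*k^2 + (-2754888708745479895272433110/3215122302995101080861207721)*k^3)^2 + (85869555879438971583834900700147/4003418849732651944271082074865664)*((-9258549031609628890622419358270/85869555879438971583834900700147)*m^3 + 1*m^2*n + (-76611006847829342693212481341877/85869555879438971583834900700147)*n^3 + (67352457816219713802590061983607/85869555879438971583834900700147)*n*k^2 + (9258549031609628890622419358270/85869555879438971583834900700147)*k^3)^2 + (12952036639904442418421999211201431/1231025953087637096625857136437307392)*(1*m^3 + (-1)*n^3 +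 2*n*k^2 + (-1)*k^3)^2) := by positivity
  have t1 : (0:ℝ) ≤ m*n*((1790127/32768)*((18422/596709)*m^2 + (-149515/1790127)*m*n + (2955511/3580254)*m*k + (94249/1790127)*n^2 + (6060821/7160508)*n*k + 1*k^2)^2 + (11371514884823/938542104576)*((-10214992579224/11371514884823)*m^2 + (-10941724660/11371514884823)*m*n + (-1470946665646/11371514884823)*m*k + (10225934303884/11371514884823)*n^2 + 1*n*k)^2 + (5216114414476507291/372621799745880064)*((2360585730206935055/5216114414476507291)*m^2 + (1225285053648562177/10432228828953014582)*m*n + 1*m*k + (-5946456514062432287/10432228828953014582)*n^2)^2 + (7294137378467864610219/683686548534264763645952)*((1865307210711718157486/2431379126155954870073)*m^2 + 1*m*n + (-4296686336867673027559/2431379126155954870073)*n^2)^2 + (71929283200142711874471685/159342862411756658365104128)*(1*m^2 + (-1)*n^2)^2) := mul_nonneg (mul_nonneg hm hn) (by positivity)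
  have t2 : (0:ℝ) ≤ m*k*((3093461/65536)*((-321302/3093461)*m^2 + (2497221/3093461)*m*n + (-212988/3093461)*m*k + (3116574/3093461)*n^2 + 1*n*k + (534290/3093461)*k^2)^2 + (2554732631373/202733060096)*((1945173316987/2554732631373)*m^2 + (1449282911404/2554732631373)*m*n + (-273801137917/2554732631373)*m*k + 1*n^2 + (-557124059690/851577543791)*k^2)^2 + (51650599898730523/167426957729660928)*((185579008944269927/51650599898730523)*m^2 + (376660054730775149/51650599898730523)*m*n + 1*m*k + (-237229608843000450/51650599898730523)*k^2)^2 + (1962118419781333586841/3384973714963203555328)*((861165647436514558891/1962118419781333586841)*m^2 + 1*m*n + (-861165647436514558891/1962118419781333586841)*k^2)^2 + (112456835306491573212842815/64294696379394738973605888)*(1*m^2 + (-1)*k^2)^2) := mul_nonneg (mul_nonneg hm hk) (by positivity)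
  have t3 : (0:ℝ) ≤ n*k*((156387/65536)*((-329411/156387)*m^2 + (5073/52129)*m*n + (-413200/156387)*m*k + (65056/52129)*n^2 + 1*n*k + (-117185/52129)*k^2)^2 + (11216964439/3416326144)*((26863098525/11216964439)*m^2 + (28567316381/11216964439)*m*n + (13291525932/11216964439)*m*k + 1*n^2 + (-1)*k^2)^2 + (60597328668994961/2205344944422912)*((60309872555682319/60597328668994961)*m^2 + (57337120339143768/60597328668994961)*m*n + 1*m*k)^2 + (14395082276906755898923/1985653265825626882048)*((9902925568458681703573/28790164553813511797846)*m^2 + 1*m*n)^2 + (70753539271762113732913501/1886792224198722309183635456)*(1*m^2)^2) := mul_nonneg (mul_nonneg hn hk) (by positivity)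
  linarith [cert, t0, t1, t2, t3]


lemma cube_abs_le (x y : ℝ) : |x*y|^3 ≤ (x*y)^2*(x^2+y^2)/2 := by
  have h1 : |x*y| ≤ (x^2+y^2)/2 := by
    rw [abs_mul]
    nlinarith [sq_nonneg (|x| - |y|), sq_abs x, sq_abs y, abs_nonneg x, abs_nonneg y]
  have h2 : |x*y|^3 = |x*y| * (x*y)^2 := by rw [← sq_abs (x*y)]; ring
  rw [h2]
  calc |x*y| * (x*y)^2 ≤ (x^2+y^2)/2 * (x*y)^2 :=
        mul_le_mul_of_nonneg_right h1 (sq_nonneg _)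
    _ = (x*y)^2*(x^2+y^2)/2 := by ring

lemma abs_cube (x y : ℝ) : x^3*y^3 ≤ |x*y|^3 ∧ -(x^3*y^3) ≤ |x*y|^3 := by
  constructor
  · calc x^3*y^3 = (x*y)^3 := by ring
      _ ≤ |(x*y)^3| := le_abs_self _
      _ = |x*y|^3 := abs_pow _ _
  · calc -(x^3*y^3) = -((x*y)^3) := by ring
      _ ≤ |(x*y)^3| := neg_le_abs _
      _ = |x*y|^3 := abs_pow _ _

/-- The global maximum of `|I₁₂|` on real semi-simple 3-qutrit states is `1/7776`. -/
theorem abs_I₁₂_le (a b c : ℝ) (h : a ^ 2 + b ^ 2 + c ^ 2 = 1) :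
    |I₁₂ a b c| ≤ 1 / 7776 := by
  obtain ⟨eab, eab'⟩ := abs_cube a b
  obtain ⟨eac, eac'⟩ := abs_cube a c
  obtain ⟨ebc, ebc'⟩ := abs_cube b c
  -- pair bounds
  have P1 : a^3*b^3*(a^3-b^3)^2 ≤ |a*b|^3*(a^6+b^6) + 2*(a*b)^6 := by
    nlinarith [mul_nonneg (sub_nonneg.mpr eab) (by positivity : (0:ℝ) ≤ a^6+b^6),
      sq_nonneg ((a*b)^3)]
  have P2 : a^3*c^3*(a^3-c^3)^2 ≤ |a*c|^3*(a^6+c^6) + 2*(a*c)^6 := by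
    nlinarith [mul_nonneg (sub_nonneg.mpr eac) (by positivity : (0:ℝ) ≤ a^6+c^6),
      sq_nonneg ((a*c)^3)]
  have P3 : b^3*c^3*(b^3-c^3)^2 ≤ |b*c|^3*(b^6+c^6) + 2*(b*c)^6 := by
    nlinarith [mul_nonneg (sub_nonneg.mpr ebc) (by positivity : (0:ℝ) ≤ b^6+c^6),
      sq_nonneg ((b*c)^3)]
  have N1 : -(a^3*b^3*(a^3-b^3)^2) ≤ |a*b|^3*(a^6+b^6) + 2*(a*b)^6 := by
    nlinarith [mul_nonneg (by linarith [eab'] : (0:ℝ) ≤ |a*b|^3 + a^3*b^3)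
      (by positivity : (0:ℝ) ≤ a^6+b^6), sq_nonneg ((a*b)^3)]
  have N2 : -(a^3*c^3*(a^3-c^3)^2) ≤ |a*c|^3*(a^6+c^6) + 2*(a*c)^6 := by
    nlinarith [mul_nonneg (by linarith [eac'] : (0:ℝ) ≤ |a*c|^3 + a^3*c^3)
      (by positivity : (0:ℝ) ≤ a^6+c^6), sq_nonneg ((a*c)^3)]
  have N3 : -(b^3*c^3*(b^3-c^3)^2) ≤ |b*c|^3*(b^6+c^6) + 2*(b*c)^6 := by
    nlinarith [mul_nonneg (by linarith [ebc'] : (0:ℝ) ≤ |b*c|^3 + b^3*c^3)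
      (by positivity : (0:ℝ) ≤ b^6+c^6), sq_nonneg ((b*c)^3)]
  -- cyclic bounds
  have C1 : a^6*(b^3-c^3)^2 ≤ a^6*(b^6 + 2*|b*c|^3 + c^6) := by
    have := mul_nonneg (by positivity : (0:ℝ) ≤ a^6)
      (by linarith [ebc'] : (0:ℝ) ≤ |b*c|^3 + b^3*c^3)
    nlinarith [this]
  have C2 : b^6*(a^3-c^3)^2 ≤ b^6*(a^6 + 2*|a*c|^3 + c^6) := by
    have := mul_nonneg (by positivity : (0:ℝ) ≤ b^6)
      (by linarith [eac'] : (0:ℝ) ≤ |a*c|^3 + a^3*c^3)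
    nlinarith [this]
  have C3 : c^6*(a^3-b^3)^2 ≤ c^6*(a^6 + 2*|a*b|^3 + b^6) := by
    have := mul_nonneg (by positivity : (0:ℝ) ≤ c^6)
      (by linarith [eab'] : (0:ℝ) ≤ |a*b|^3 + a^3*b^3)
    nlinarith [this]
  have C1n : (0:ℝ) ≤ a^6*(b^6 + 2*|b*c|^3 + c^6) := by positivity
  have C2n : (0:ℝ) ≤ b^6*(a^6 + 2*|a*c|^3 + c^6) := by positivity
  have C3n : (0:ℝ) ≤ c^6*(a^6 + 2*|a*b|^3 + b^6) := by positivity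
  have C1s : (0:ℝ) ≤ a^6*(b^3-c^3)^2 := by positivity
  have C2s : (0:ℝ) ≤ b^6*(a^3-c^3)^2 := by positivity
  have C3s : (0:ℝ) ≤ c^6*(a^3-b^3)^2 := by positivity
  -- G expression
  set G : ℝ := |a*b|^3*(a^6+b^6) + 2*(a*b)^6 + |a*c|^3*(a^6+c^6) + 2*(a*c)^6 +
      |b*c|^3*(b^6+c^6) + 2*(b*c)^6 + a^6*(b^6 + 2*|b*c|^3 + c^6) +
      b^6*(a^6 + 2*|a*c|^3 + c^6) + c^6*(a^6 + 2*|a*b|^3 + b^6) with hG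
  have BG : (a^9*b^3 + a^3*b^9 + a^9*c^3 + b^9*c^3 + a^3*c^9 + b^3*c^9 - 4*(a^6*b^6 + a^6*c^6 + b^6*c^6) + 2*(a^6*b^3*c^3 + a^3*b^6*c^3 + a^3*b^3*c^6)) ≤ G := by
    have id1 : (a^9*b^3 + a^3*b^9 + a^9*c^3 + b^9*c^3 + a^3*c^9 + b^3*c^9 - 4*(a^6*b^6 + a^6*c^6 + b^6*c^6) + 2*(a^6*b^3*c^3 + a^3*b^6*c^3 + a^3*b^3*c^6)) =
        a^3*b^3*(a^3-b^3)^2 + a^3*c^3*(a^3-c^3)^2 + b^3*c^3*(b^3-c^3)^2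
          - (a^6*(b^3-c^3)^2 + b^6*(a^3-c^3)^2 + c^6*(a^3-b^3)^2) := by ring
    rw [id1, hG]
    linarith [P1, P2, P3, C1s, C2s, C3s, C1n, C2n, C3n]
  have BG' : -(a^9*b^3 + a^3*b^9 + a^9*c^3 + b^9*c^3 + a^3*c^9 + b^3*c^9 - 4*(a^6*b^6 + a^6*c^6 + b^6*c^6) + 2*(a^6*b^3*c^3 + a^3*b^6*c^3 + a^3*b^3*c^6)) ≤ G := by
    have id1 : -(a^9*b^3 + a^3*b^9 + a^9*c^3 + b^9*c^3 + a^3*c^9 + b^3*c^9 - 4*(a^6*b^6 + a^6*c^6 + b^6*c^6) + 2*(a^6*b^3*c^3 + a^3*b^6*c^3 + a^3*b^3*c^6)) =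
        a^6*(b^3-c^3)^2 + b^6*(a^3-c^3)^2 + c^6*(a^3-b^3)^2
          - (a^3*b^3*(a^3-b^3)^2 + a^3*c^3*(a^3-c^3)^2 + b^3*c^3*(b^3-c^3)^2) := by ring
    rw [id1, hG]
    linarith [N1, N2, N3, C1, C2, C3]
  -- G ≤ H (replace |xy|^3 by even bound)
  have hT1 := cube_abs_le a b
  have hT2 := cube_abs_le a c
  have hT3 := cube_abs_le b c
  set H : ℝ := (a*b)^2*(a^2+b^2)/2*(a^6+b^6+2*c^6) + (a*c)^2*(a^2+c^2)/2*(a^6+c^6+2*b^6) +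
      (b*c)^2*(b^2+c^2)/2*(b^6+c^6+2*a^6) + 4*((a*b)^6+(a*c)^6+(b*c)^6) with hH
  have GH : G ≤ H := by
    have m1 : |a*b|^3*(a^6+b^6+2*c^6) ≤ (a*b)^2*(a^2+b^2)/2*(a^6+b^6+2*c^6) :=
      mul_le_mul_of_nonneg_right hT1 (by positivity)
    have m2 : |a*c|^3*(a^6+c^6+2*b^6) ≤ (a*c)^2*(a^2+c^2)/2*(a^6+c^6+2*b^6) :=
      mul_le_mul_of_nonneg_right hT2 (by positivity)
    have m3 : |b*c|^3*(b^6+c^6+2*a^6) ≤ (b*c)^2*(b^2+c^2)/2*(b^6+c^6+2*a^6) :=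
      mul_le_mul_of_nonneg_right hT3 (by positivity)
    rw [hG, hH]
    linarith [m1, m2, m3]
  -- H ≤ 3/32 via master inequality
  have hm := master_ineq (a^2) (b^2) (c^2) (sq_nonneg a) (sq_nonneg b) (sq_nonneg c)
  rw [h] at hm
  norm_num at hm
  have H332 : H ≤ 3/32 := by
    rw [hH]; linarith [hm]
  have Bup : (a^9*b^3 + a^3*b^9 + a^9*c^3 + b^9*c^3 + a^3*c^9 + b^3*c^9 - 4*(a^6*b^6 + a^6*c^6 + b^6*c^6) + 2*(a^6*b^3*c^3 + a^3*b^6*c^3 + a^3*b^3*c^6)) ≤ 3/32 := le_trans BG (le_trans GH H332)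
  have Bdown : -(3/32 : ℝ) ≤ (a^9*b^3 + a^3*b^9 + a^9*c^3 + b^9*c^3 + a^3*c^9 + b^3*c^9 - 4*(a^6*b^6 + a^6*c^6 + b^6*c^6) + 2*(a^6*b^3*c^3 + a^3*b^6*c^3 + a^3*b^3*c^6)) := by
    have := le_trans BG' (le_trans GH H332)
    linarith
  rw [abs_le]
  unfold I₁₂
  constructor
  · linarith [Bdown]
  · linarith [Bup]
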